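/- For positive C² functions ρ and P on ℝ³, with u = −(ℏ/(2m))∇ρ/ρ and P = (ℏ/2)∇·(ρu), the identity ρ∇(P/ρ) = ∇P + ∇·(ρₘu) u holds, where ρₘ = mρ. -/

import Mathlib

/-!
The quotient rule gives `ρ ∇(P/ρ) = ∇P - (P/ρ) ∇ρ`. On the other hand the divergence is linear, so
`∇·(mρu) u = m ∇·(ρu) · (-(ℏ/(2m)) ∇ρ/ρ) = -(ℏ/2) ∇·(ρu) ∇ρ/ρ = -(P/ρ) ∇ρ`.
Differentiability of `P` comes from `ρu = -(ℏ/(2m)) ∇ρ` being `C²` when `ρ` is `C³`.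
-/

noncomputable section
open scoped BigOperators

/-- Physical space ℝ³. -/
abbrev Spc := Fin 3 → ℝ

/-- Partial derivative of a real-valued function in the `i`-th coordinate direction. -/
def pdR (i : Fin 3) (f : Spc → ℝ) (x : Spc) : ℝ := fderiv ℝ f x (Pi.single i 1)

/-- Divergence of a real vector field. -/
def divR (F : Spc → Fin 3 → ℝ) (x : Spc) : ℝ := ∑ i, pdR i (fun y => F y i) x

lemma pdR_const_mul (i : Fin 3) (c : ℝ) (f : Spc → ℝ) (x : Spc) :
    pdR i (fun y => c * f y) x = c * pdR i f x := by
  simp only [pdR, ← smul_eq_mul, ← Pi.smul_def, fderiv_const_smul_field]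
  rfl

lemma divR_const_mul (c : ℝ) (F : Spc → Fin 3 → ℝ) (x : Spc) :
    divR (fun y j => c * F y j) x = c * divR F x := by
  simp only [divR, pdR_const_mul, Finset.mul_sum]

lemma ContDiff.pdR {n k : WithTop ℕ∞} {f : Spc → ℝ} (hf : ContDiff ℝ n f) (hkn : k + 1 ≤ n)
    (i : Fin 3) : ContDiff ℝ k (pdR i f) :=
  (hf.fderiv_right hkn).clm_apply contDiff_const

lemma ContDiff.divR {n k : WithTop ℕ∞} {F : Spc → Fin 3 → ℝ}
    (hF : ∀ j, ContDiff ℝ n (fun y => F y j)) (hkn : k + 1 ≤ n) : ContDiff ℝ k (divR F) :=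
  ContDiff.sum fun j _ => (hF j).pdR hkn j

lemma mul_pdR_div (i : Fin 3) {f g : Spc → ℝ} {x : Spc} (hf : DifferentiableAt ℝ f x)
    (hg : DifferentiableAt ℝ g x) (hgx : g x ≠ 0) :
    g x * pdR i (fun y => f y / g y) x = pdR i f x - f x / g x * pdR i g x := by
  have hinv : HasFDerivAt (fun y => (g y)⁻¹) (-((g x) ^ 2)⁻¹ • fderiv ℝ g x) x :=
    (hasDerivAt_inv hgx).comp_hasFDerivAt x hg.hasFDerivAt
  have hquot : HasFDerivAt (fun y => f y / g y)
      (f x • -((g x) ^ 2)⁻¹ • fderiv ℝ g x + (g x)⁻¹ • fderiv ℝ f x) x := by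
    simpa only [div_eq_mul_inv] using hf.hasFDerivAt.fun_mul hinv
  simp only [pdR, hquot.fderiv, add_apply, smul_apply, smul_eq_mul]
  field_simp
  ring

theorem stmt15_general (ℏ m : ℝ) (hm : 0 < m)
    (ρ : Spc → ℝ) (hρ : ContDiff ℝ 3 ρ) (hpos : ∀ x, 0 < ρ x)
    (u : Spc → Fin 3 → ℝ) (hu : ∀ x i, u x i = -(ℏ/(2*m)) * pdR i ρ x / ρ x)
    (P : Spc → ℝ) (hP : ∀ x, P x = (ℏ/2) * divR (fun y i => ρ y * u y i) x) :
    ∀ x i, ρ x * pdR i (fun y => P y / ρ y) x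
      = pdR i P x + divR (fun y j => m * ρ y * u y j) x * u x i := by
  intro x i
  have hρu : ∀ j, (fun y => ρ y * u y j) = fun y => -(ℏ/(2*m)) * pdR j ρ y := fun j ↦ by
    ext y
    rw [hu, mul_div_cancel₀ _ (hpos y).ne']
  have hP_diff : Differentiable ℝ P := by
    have hρu_smooth : ∀ j, ContDiff ℝ 2 (fun y => ρ y * u y j) := fun j ↦ by
      rw [hρu]
      exact contDiff_const.mul (hρ.pdR (by norm_num) j)
    rw [funext hP]
    exact ((ContDiff.divR (k := 1) hρu_smooth (by norm_num)).differentiable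
      one_ne_zero).const_mul _
  have hflux : divR (fun y j => m * ρ y * u y j) x * u x i = -(P x / ρ x) * pdR i ρ x :=
    calc divR (fun y j => m * ρ y * u y j) x * u x i
        = m * divR (fun y j => ρ y * u y j) x * u x i := by simp only [mul_assoc, divR_const_mul]
      _ = -(P x / ρ x) * pdR i ρ x := by
        rw [hP x, hu]
        field_simp
  rw [mul_pdR_div i (hP_diff x) (hρ.differentiable (by norm_num) x) (hpos x).ne', hflux]
  ring

/-- with `u = −(ℏ/(2m))∇ρ/ρ` and `P = (ℏ/2)∇·(ρu)`, the identity
`ρ∇(P/ρ) = ∇P + ∇·(ρₘu)u` holds, where `ρₘ = mρ`. -/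
theorem stmt15 (ℏ m : ℝ) (hℏ : 0 < ℏ) (hm : 0 < m)
    (ρ : Spc → ℝ) (hρ : ContDiff ℝ 3 ρ) (hpos : ∀ x, 0 < ρ x)
    (u : Spc → Fin 3 → ℝ) (hu : ∀ x i, u x i = -(ℏ/(2*m)) * pdR i ρ x / ρ x)
    (P : Spc → ℝ) (hP : ∀ x, P x = (ℏ/2) * divR (fun y i => ρ y * u y i) x) :
    ∀ x i, ρ x * pdR i (fun y => P y / ρ y) x
      = pdR i P x + divR (fun y j => m * ρ y * u y j) x * u x i :=
  stmt15_general ℏ m hm ρ hρ hpos u hu P hP
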